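/- For any linear map f*: V → W into a space with generalized metric given by (γ, ψ), the intersection f⃖*W₊ ∩ f⃖*W₋ equals ker f* (embedded in V ⊕ V* as pairs (X,0) with f*X = 0). -/
import Mathlib


open LinearMap

/-- The pullback `f⃖*U = {(X, f*η) : (f*X, η) ∈ U}`. -/
noncomputable def Pullback {V W : Type*} [AddCommGroup V] [Module ℝ V]
    [AddCommGroup W] [Module ℝ W] (f : V →ₗ[ℝ] W)
    (U : Submodule ℝ (W × Module.Dual ℝ W)) :
    Submodule ℝ (V × Module.Dual ℝ V) :=
  Submodule.map (LinearMap.prodMap LinearMap.id f.dualMap)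
    (Submodule.comap (LinearMap.prodMap f LinearMap.id) U)

lemma mem_pullback_graph {V W : Type*} [AddCommGroup V] [Module ℝ V]
    [AddCommGroup W] [Module ℝ W] (f : V →ₗ[ℝ] W)
    (A : W →ₗ[ℝ] Module.Dual ℝ W) (x : V) (η : Module.Dual ℝ V) :
    (x, η) ∈ Pullback f (LinearMap.graph A) ↔ η = f.dualMap (A (f x)) := by
  constructor
  · rintro ⟨⟨a, ξ⟩, hmem, heq⟩
    simp only [SetLike.mem_coe, Submodule.mem_comap, LinearMap.mem_graph_iff] at hmem
    simp only [LinearMap.prodMap_apply, LinearMap.id_apply, Prod.mk.injEq] at hmem heq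
    obtain ⟨ha, hη⟩ := heq
    subst ha
    rw [← hη, ← hmem]
  · intro h
    exact ⟨(x, A (f x)), by simp [Submodule.mem_comap, LinearMap.mem_graph_iff], by simp [h]⟩

/-- For any linear map `f : V → W` into a space with generalized metric given
by `(γ, ψ)`, with `W± = graph((ψ ± γ)♭)`, the intersection `f⃖*W₊ ∩ f⃖*W₋`
equals `ker f`, embedded in `V ⊕ V*` as the pairs `(X, 0)`, `f X = 0`. -/
theorem pullback_eigenspaces_inter_eq_ker
    (V W : Type*) [AddCommGroup V] [Module ℝ V] [FiniteDimensional ℝ V]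
    [AddCommGroup W] [Module ℝ W] [FiniteDimensional ℝ W]
    (f : V →ₗ[ℝ] W)
    (gamFl psiFl : W →ₗ[ℝ] Module.Dual ℝ W)
    (hgam_symm : ∀ X Y : W, gamFl X Y = gamFl Y X)
    (hgam_pos : ∀ X : W, X ≠ 0 → 0 < gamFl X X)
    (hpsi : ∀ X Y : W, psiFl X Y = - psiFl Y X) :
    Pullback f (LinearMap.graph (psiFl + gamFl)) ⊓
      Pullback f (LinearMap.graph (psiFl - gamFl)) =
    Submodule.map (LinearMap.inl ℝ V (Module.Dual ℝ V)) (LinearMap.ker f) := by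
  ext ⟨x, η⟩
  rw [Submodule.mem_inf, mem_pullback_graph, mem_pullback_graph]
  constructor
  · rintro ⟨h1, h2⟩
    have hfx : f x = 0 := by
      by_contra hne
      have hpos := hgam_pos (f x) hne
      have : f.dualMap ((psiFl + gamFl) (f x)) x = f.dualMap ((psiFl - gamFl) (f x)) x := by
        rw [← h1, ← h2]
      simp only [LinearMap.dualMap_apply, LinearMap.add_apply, LinearMap.sub_apply,
        LinearMap.add_apply, LinearMap.sub_apply] at this
      have : gamFl (f x) (f x) = 0 := by linarith
      linarith
    refine ⟨x, hfx, ?_⟩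
    simp only [LinearMap.inl_apply, Prod.mk.injEq, true_and]
    rw [h1, hfx]
    simp
  · rintro ⟨a, ha, heq⟩
    simp only [LinearMap.inl_apply, Prod.mk.injEq] at heq
    obtain ⟨hax, hη⟩ := heq
    subst hax
    simp only [SetLike.mem_coe, LinearMap.mem_ker] at ha
    constructor <;> (rw [← hη, ha]; simp)
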